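/- For 0 < q < p ≤ 1, any n ≥ 1, and any x ∈ [0,1], the revised (p,q)-Bernstein operator applied to f(t) = t satisfies B_{n,p,q}(t; x) = x. -/

import Mathlib

open Finset

noncomputable def pqInt (p q : ℝ) (m : ℕ) : ℝ := (p ^ m - q ^ m) / (p - q)

noncomputable def pqFact (p q : ℝ) (m : ℕ) : ℝ := ∏ j ∈ Finset.Icc 1 m, pqInt p q j

noncomputable def pqChoose (p q : ℝ) (n k : ℕ) : ℝ :=
  pqFact p q n / (pqFact p q k * pqFact p q (n - k))

/-- The sample node `[k]_{p,q}/(p^{k-n}[n]_{p,q}) = p^{n-k}[k]_{p,q}/[n]_{p,q}`. -/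
noncomputable def pqNode (p q : ℝ) (n k : ℕ) : ℝ :=
  p ^ (n - k) * pqInt p q k / pqInt p q n

/-- Basis function `b_{n,k}(x)` of the revised (p,q)-Bernstein operator. -/
noncomputable def pqBasis (p q : ℝ) (n k : ℕ) (x : ℝ) : ℝ :=
  (p ^ (n * (n - 1) / 2))⁻¹ * pqChoose p q n k * p ^ (k * (k - 1) / 2) * x ^ k *
    ∏ s ∈ Finset.range (n - k), (p ^ s - q ^ s * x)

/-- The revised (p,q)-Bernstein operator. -/
noncomputable def pqBern (p q : ℝ) (n : ℕ) (f : ℝ → ℝ) (x : ℝ) : ℝ :=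
  ∑ k ∈ Finset.range (n + 1), pqBasis p q n k x * f (pqNode p q n k)

/-!
With `W = pqWeight`, `b_{n,k} = p^{-n(n-1)/2} W n k`. The (p,q)-Pascal rule splits
`W (n+1) (k+1)` into a multiple of `W n (k+1)` and a multiple of `W n k`; regrouped by `W n k`,
the two pieces recombine to `p^k (p^{n-k} - q^{n-k} x) + p^k q^{n-k} x = p^n`, so
`∑ₖ W (n+1) k = p^n ∑ₖ W n k` and the basis is a partition of unity. The absorption identity
`[n+1 choose k+1] [k+1] = [n+1] [n choose k]` then gives
`b_{n+1,k+1}(x) · node_{n+1,k+1} = x · b_{n,k}(x)`, while the node at `k = 0` is `0`.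
-/

lemma pqInt_add {p q : ℝ} (hpq : p ≠ q) (a b : ℕ) :
    pqInt p q (a + b) = p ^ a * pqInt p q b + q ^ b * pqInt p q a := by
  have : p - q ≠ 0 := sub_ne_zero.mpr hpq
  simp only [pqInt]
  field_simp
  ring

lemma pqInt_pos {p q : ℝ} (hq : 0 ≤ q) (hqp : q < p) {m : ℕ} (hm : m ≠ 0) : 0 < pqInt p q m :=
  div_pos (sub_pos.mpr (pow_lt_pow_left₀ hqp hq hm)) (sub_pos.mpr hqp)

@[simp]
lemma pqFact_zero (p q : ℝ) : pqFact p q 0 = 1 := by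
  simp [pqFact]

lemma pqFact_succ (p q : ℝ) (m : ℕ) : pqFact p q (m + 1) = pqFact p q m * pqInt p q (m + 1) :=
  prod_Icc_succ_top (by omega) _

lemma pqFact_pos {p q : ℝ} (hq : 0 ≤ q) (hqp : q < p) (m : ℕ) : 0 < pqFact p q m :=
  prod_pos fun _ hj => pqInt_pos hq hqp (by have := (mem_Icc.mp hj).1; omega)

lemma pqChoose_zero_right {p q : ℝ} (hq : 0 ≤ q) (hqp : q < p) (n : ℕ) :
    pqChoose p q n 0 = 1 := by
  simp [pqChoose, (pqFact_pos hq hqp n).ne']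

lemma pqChoose_self {p q : ℝ} (hq : 0 ≤ q) (hqp : q < p) (n : ℕ) : pqChoose p q n n = 1 := by
  simp [pqChoose, (pqFact_pos hq hqp n).ne']

lemma pqChoose_succ_succ {p q : ℝ} (hq : 0 ≤ q) (hqp : q < p) {n k : ℕ} (hk : k < n) :
    pqChoose p q (n + 1) (k + 1) =
      p ^ (k + 1) * pqChoose p q n (k + 1) + q ^ (n - k) * pqChoose p q n k := by
  obtain ⟨j, rfl⟩ : ∃ j, n = k + 1 + j := ⟨n - (k + 1), by omega⟩
  have hsplit : pqInt p q (k + 1 + j + 1) =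
      p ^ (k + 1) * pqInt p q (j + 1) + q ^ (j + 1) * pqInt p q (k + 1) := by
    rw [add_assoc, pqInt_add hqp.ne']
  have hfact := fun m => (pqFact_pos hq hqp m).ne'
  have hint := fun m => (pqInt_pos hq hqp (Nat.succ_ne_zero m)).ne'
  simp only [pqChoose, show k + 1 + j + 1 - (k + 1) = j + 1 by omega,
    show k + 1 + j - (k + 1) = j by omega, show k + 1 + j - k = j + 1 by omega]
  rw [pqFact_succ p q (k + 1 + j), pqFact_succ p q k, pqFact_succ p q j, hsplit]
  field_simp [hfact, hint]

lemma pqChoose_succ_succ_mul_pqInt {p q : ℝ} (hq : 0 ≤ q) (hqp : q < p) {m k : ℕ}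
    (hk : k ≤ m) :
    pqChoose p q (m + 1) (k + 1) * pqInt p q (k + 1) = pqInt p q (m + 1) * pqChoose p q m k := by
  have hfact := fun m => (pqFact_pos hq hqp m).ne'
  have hint := (pqInt_pos hq hqp (Nat.succ_ne_zero k)).ne'
  rw [pqChoose, pqChoose, pqFact_succ p q m, pqFact_succ p q k,
    show m + 1 - (k + 1) = m - k by omega]
  field_simp [hfact, hint]

lemma Finset.sum_range_succ_shift {M : Type*} [AddCommMonoid M] {f a b : ℕ → M} {n : ℕ}
    (h0 : f 0 = a 0) (hsucc : ∀ k < n, f (k + 1) = a (k + 1) + b k) (hlast : f (n + 1) = b n) :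
    ∑ j ∈ range (n + 2), f j = ∑ k ∈ range (n + 1), (a k + b k) := by
  rw [sum_range_succ', sum_range_succ, sum_congr rfl fun k hk => hsucc k (mem_range.mp hk),
    sum_add_distrib, sum_add_distrib, sum_range_succ' a, sum_range_succ b, h0, hlast]
  abel

noncomputable def pqWeight (p q : ℝ) (n k : ℕ) (x : ℝ) : ℝ :=
  pqChoose p q n k * p ^ (k * (k - 1) / 2) * x ^ k * ∏ s ∈ range (n - k), (p ^ s - q ^ s * x)

lemma pqBasis_eq (p q : ℝ) (n k : ℕ) (x : ℝ) :
    pqBasis p q n k x = (p ^ (n * (n - 1) / 2))⁻¹ * pqWeight p q n k x := by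
  simp only [pqBasis, pqWeight, mul_assoc]

lemma pqWeight_succ_zero {p q : ℝ} (hq : 0 ≤ q) (hqp : q < p) (n : ℕ) (x : ℝ) :
    pqWeight p q (n + 1) 0 x = (p ^ n - q ^ n * x) * pqWeight p q n 0 x := by
  simp [pqWeight, pqChoose_zero_right hq hqp, prod_range_succ, mul_comm]

lemma pqWeight_succ_self {p q : ℝ} (hq : 0 ≤ q) (hqp : q < p) (n : ℕ) (x : ℝ) :
    pqWeight p q (n + 1) (n + 1) x = p ^ n * x * pqWeight p q n n x := by
  simp only [pqWeight, pqChoose_self hq hqp, Nat.triangle_succ, Nat.sub_self, prod_range_zero]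
  ring

lemma pqWeight_succ_succ {p q : ℝ} (hq : 0 ≤ q) (hqp : q < p) {n k : ℕ} (hk : k < n) (x : ℝ) :
    pqWeight p q (n + 1) (k + 1) x =
      p ^ (k + 1) * (p ^ (n - (k + 1)) - q ^ (n - (k + 1)) * x) * pqWeight p q n (k + 1) x +
        p ^ k * q ^ (n - k) * x * pqWeight p q n k x := by
  simp only [pqWeight, pqChoose_succ_succ hq hqp hk, Nat.triangle_succ,
    show n + 1 - (k + 1) = n - (k + 1) + 1 by omega, show n - k = n - (k + 1) + 1 by omega,
    prod_range_succ]
  ring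

lemma sum_pqWeight_succ {p q : ℝ} (hq : 0 ≤ q) (hqp : q < p) (n : ℕ) (x : ℝ) :
    ∑ k ∈ range (n + 2), pqWeight p q (n + 1) k x =
      p ^ n * ∑ k ∈ range (n + 1), pqWeight p q n k x := by
  rw [sum_range_succ_shift
      (a := fun k => p ^ k * (p ^ (n - k) - q ^ (n - k) * x) * pqWeight p q n k x)
      (b := fun k => p ^ k * q ^ (n - k) * x * pqWeight p q n k x)
      (by simp [pqWeight_succ_zero hq hqp]) (fun k hk => pqWeight_succ_succ hq hqp hk x)
      (by simp [pqWeight_succ_self hq hqp]), mul_sum]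
  refine sum_congr rfl fun k hk => ?_
  have hpow : p ^ k * p ^ (n - k) = p ^ n := by
    rw [← pow_add, Nat.add_sub_cancel' (Nat.lt_succ_iff.mp (mem_range.mp hk))]
  linear_combination pqWeight p q n k x * hpow

lemma sum_pqWeight {p q : ℝ} (hq : 0 ≤ q) (hqp : q < p) (n : ℕ) (x : ℝ) :
    ∑ k ∈ range (n + 1), pqWeight p q n k x = p ^ (n * (n - 1) / 2) := by
  induction n with
  | zero => simp [pqWeight, pqChoose_self hq hqp]
  | succ n ih => rw [sum_pqWeight_succ hq hqp, ih, Nat.triangle_succ, pow_add, mul_comm]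

lemma sum_pqBasis {p q : ℝ} (hq : 0 ≤ q) (hqp : q < p) (n : ℕ) (x : ℝ) :
    ∑ k ∈ range (n + 1), pqBasis p q n k x = 1 := by
  have hp : p ≠ 0 := (hq.trans_lt hqp).ne'
  simp only [pqBasis_eq, ← mul_sum, sum_pqWeight hq hqp]
  exact inv_mul_cancel₀ (pow_ne_zero _ hp)

lemma pqBasis_succ_succ_mul_pqNode {p q : ℝ} (hq : 0 ≤ q) (hqp : q < p) {m k : ℕ}
    (hk : k ≤ m) (x : ℝ) :
    pqBasis p q (m + 1) (k + 1) x * pqNode p q (m + 1) (k + 1) = x * pqBasis p q m k x := by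
  have hp : p ≠ 0 := (hq.trans_lt hqp).ne'
  have hint := (pqInt_pos hq hqp (Nat.succ_ne_zero m)).ne'
  have habsorb := pqChoose_succ_succ_mul_pqInt hq hqp hk
  have hpow : p ^ k * p ^ (m - k) = p ^ m := by rw [← pow_add, Nat.add_sub_cancel' hk]
  rw [pqBasis, pqBasis, pqNode, Nat.triangle_succ, Nat.triangle_succ,
    show m + 1 - (k + 1) = m - k by omega]
  generalize ∏ s ∈ range (m - k), (p ^ s - q ^ s * x) = P
  field_simp
  rw [pow_add p _ m, ← hpow]
  linear_combination
    p ^ (m * (m - 1) / 2) * p ^ (k * (k - 1) / 2) * p ^ k * p ^ (m - k) * x ^ (k + 1) * P * habsorb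

theorem pqBern_id_general (p q : ℝ) (n : ℕ) (hn : 1 ≤ n)
    (hq : 0 < q) (hqp : q < p) (x : ℝ) :
    pqBern p q n (fun t => t) x = x := by
  obtain ⟨m, rfl⟩ : ∃ m, n = m + 1 := ⟨n - 1, by omega⟩
  have hnode_zero : pqNode p q (m + 1) 0 = 0 := by simp [pqNode, pqInt]
  rw [pqBern, sum_range_succ', hnode_zero, mul_zero, add_zero,
    sum_congr rfl fun k hk => pqBasis_succ_succ_mul_pqNode hq.le hqp (mem_range_succ_iff.mp hk) x,
    ← mul_sum, sum_pqBasis hq.le hqp, mul_one]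

theorem pqBern_id (p q : ℝ) (n : ℕ) (hn : 1 ≤ n)
    (hq : 0 < q) (hqp : q < p) (hp : p ≤ 1) (x : ℝ) (hx : x ∈ Set.Icc (0:ℝ) 1) :
    pqBern p q n (fun t => t) x = x :=
  pqBern_id_general p q n hn hq hqp x
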